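/- arXiv:2206.05227 — 4 statements merged into one kernel-verified Lean document; each statement's English description precedes it below -/
import Mathlib

section
/- Let M be a symmetric positive semidefinite d×d real matrix with block structure indexed by a partition (A,B,C) of {1,...,d} such that the block M_{A,C} is zero. Then for any symmetric matrix N indexed by B×B, there exists a symmetric matrix S indexed by B×B such that both block matrices [[M_{A,A}, M_{A,B}],[M_{A,B}^T, N−S]] and [[M_{B,B}−N+S, M_{B,C}],[M_{B,C}^T, M_{C,C}]] are positive semidefinite. -/
/-!
Let `K` be the Moore–Penrose pseudoinverse of `M_CC` and `T = M_BC K M_CB`, and take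
`S = N - M_BB + T`, so that `N - S = M_BB - T` and `M_BB - N + S = T`.

Both claims are generalized Schur complement statements for a positive semidefinite block matrix
`[[P, Q], [Qᴴ, R]]` and a hermitian `K` with `R K R = R` and `K R K = K`. Conjugating by
`[1; -K Qᴴ]` shows that `P - Q K Qᴴ` is positive semidefinite; applied to the `(A ∪ B, C)`
splitting of `M`, where `M_AC = 0`, this is the first claim. Since `ker R ⊆ ker Q`, we get
`Q K R = Q`, so `[[Q K Qᴴ, Q], [Qᴴ, R]] = Xᴴ R X` for `X = [K Qᴴ, 1]`; applied to the `(B, C)`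
splitting this is the second claim.
-/

open Matrix
open scoped ComplexOrder

namespace Matrix

theorem submatrix_sumElim_sumElim {α l l' m₁ m₂ n₁ n₂ : Type*} (M : Matrix l l' α)
    (f₁ : m₁ → l) (f₂ : m₂ → l) (g₁ : n₁ → l') (g₂ : n₂ → l') :
    M.submatrix (Sum.elim f₁ f₂) (Sum.elim g₁ g₂) =
      fromBlocks (M.submatrix f₁ g₁) (M.submatrix f₁ g₂) (M.submatrix f₂ g₁)
        (M.submatrix f₂ g₂) := by
  ext (i | i) (j | j) <;> rfl

theorem submatrix_sumElim_left {α l l' m₁ m₂ n : Type*} (M : Matrix l l' α)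
    (f₁ : m₁ → l) (f₂ : m₂ → l) (g : n → l') :
    M.submatrix (Sum.elim f₁ f₂) g = fromRows (M.submatrix f₁ g) (M.submatrix f₂ g) := by
  ext (i | i) j <;> rfl

variable {𝕜 l m n k : Type*} [RCLike 𝕜] [Fintype m] [Fintype n]

/-- The witness is the Moore–Penrose pseudoinverse `cfc (·⁻¹) R`, using `0⁻¹ = 0`. -/
theorem IsHermitian.exists_isHermitian_mul_mul_eq_self [DecidableEq n] {R : Matrix n n 𝕜}
    (hR : R.IsHermitian) :
    ∃ K : Matrix n n 𝕜, K.IsHermitian ∧ R * K * R = R ∧ K * R * K = K := by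
  have hcont (f : ℝ → ℝ) : ContinuousOn f (spectrum ℝ R) := R.finite_real_spectrum.continuousOn f
  have cfc_mul_mul (f g h : ℝ → ℝ) :
      cfc f R * cfc g R * cfc h R = cfc (fun x ↦ f x * g x * h x) R := by
    rw [cfc_mul _ _ R (hcont _) (hcont _), cfc_mul _ _ R (hcont _) (hcont _)]
  have cfc_id : cfc (fun x : ℝ ↦ x) R = R := cfc_id' ℝ R hR
  refine ⟨cfc (·⁻¹ : ℝ → ℝ) R, cfc_predicate _ R, ?_, ?_⟩
  · simpa only [cfc_id, mul_inv_mul_cancel] using cfc_mul_mul (fun x ↦ x) (·⁻¹) (fun x ↦ x)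
  · calc _ = cfc (fun x : ℝ ↦ x⁻¹ * x * x⁻¹) R := by rw [← cfc_mul_mul, cfc_id]
      _ = _ := by congr 1 with x; simpa using mul_inv_mul_cancel x⁻¹

omit [Fintype m] in
theorem PosSemidef.mul_eq_zero_of_conjTranspose_mul_mul_eq_zero {A : Matrix n n 𝕜}
    (hA : A.PosSemidef) {X : Matrix n m 𝕜} (h : Xᴴ * A * X = 0) : A * X = 0 := by
  classical
  open scoped MatrixOrder in
  obtain ⟨B, rfl⟩ := CStarAlgebra.nonneg_iff_eq_star_mul_self.mp hA.nonneg
  rw [star_eq_conjTranspose] at h ⊢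
  rw [Matrix.mul_assoc, Matrix.mul_assoc, ← Matrix.mul_assoc Xᴴ, ← conjTranspose_mul,
    conjTranspose_mul_self_eq_zero] at h
  rw [Matrix.mul_assoc, h, Matrix.mul_zero]

section GeneralizedSchurComplement

variable {P : Matrix m m 𝕜} {Q : Matrix m n 𝕜} {R K : Matrix n n 𝕜}

theorem PosSemidef.mul_eq_zero_of_fromBlocks {E : Matrix n k 𝕜}
    (hM : (fromBlocks P Q Qᴴ R).PosSemidef) (hRE : R * E = 0) : Q * E = 0 := by
  let X := fromRows (0 : Matrix m k 𝕜) E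
  have hMX : fromBlocks P Q Qᴴ R * X = fromRows (Q * E) 0 := by
    simp [X, fromBlocks_mul_fromRows, hRE]
  have h := hM.mul_eq_zero_of_conjTranspose_mul_mul_eq_zero (X := X) (by
    simp [X, conjTranspose_fromRows_eq_fromCols_conjTranspose, Matrix.mul_assoc, hMX,
      fromCols_mul_fromRows])
  rw [hMX, ← fromRows_zero] at h
  exact (fromRows_inj h).1

theorem PosSemidef.mul_mul_eq_of_fromBlocks [DecidableEq n] (hM : (fromBlocks P Q Qᴴ R).PosSemidef)
    (hRKR : R * K * R = R) : Q * K * R = Q := by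
  have := hM.mul_eq_zero_of_fromBlocks (E := 1 - K * R) (by
    rw [Matrix.mul_sub, Matrix.mul_one, ← Matrix.mul_assoc, hRKR, sub_self])
  rw [Matrix.mul_sub, Matrix.mul_one, ← Matrix.mul_assoc, sub_eq_zero] at this
  exact this.symm

theorem PosSemidef.sub_mul_mul_conjTranspose [DecidableEq m]
    (hM : (fromBlocks P Q Qᴴ R).PosSemidef) (hK : K.IsHermitian) (hKRK : K * R * K = K) :
    (P - Q * K * Qᴴ).PosSemidef := by
  have hKRKQ : K * (R * (K * Qᴴ)) = K * Qᴴ := by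
    rw [← Matrix.mul_assoc, ← Matrix.mul_assoc, hKRK]
  let Y := fromRows (1 : Matrix m m 𝕜) (-(K * Qᴴ))
  have hY : Yᴴ * fromBlocks P Q Qᴴ R * Y = P - Q * K * Qᴴ := by
    rw [Matrix.mul_assoc, fromBlocks_mul_fromRows,
      conjTranspose_fromRows_eq_fromCols_conjTranspose, fromCols_mul_fromRows]
    simp only [conjTranspose_one, conjTranspose_neg, conjTranspose_mul, hK.eq,
      conjTranspose_conjTranspose, Matrix.one_mul, Matrix.mul_one, Matrix.mul_neg,
      Matrix.neg_mul, Matrix.mul_add, Matrix.mul_assoc, hKRKQ]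
    abel
  exact hY ▸ hM.conjTranspose_mul_mul_same Y

theorem PosSemidef.fromBlocks_mul_mul_conjTranspose [DecidableEq n]
    (hM : (fromBlocks P Q Qᴴ R).PosSemidef) (hK : K.IsHermitian) (hRKR : R * K * R = R) :
    (fromBlocks (Q * K * Qᴴ) Q Qᴴ R).PosSemidef := by
  have hR : R.PosSemidef := hM.submatrix Sum.inr
  have hQKR : Q * K * R = Q := hM.mul_mul_eq_of_fromBlocks hRKR
  have hRKQ : R * (K * Qᴴ) = Qᴴ := by
    simpa only [conjTranspose_mul, hK.eq, hR.1.eq, Matrix.mul_assoc]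
      using congrArg (·ᴴ) hQKR
  let X := fromCols (K * Qᴴ) (1 : Matrix n n 𝕜)
  have hX : Xᴴ * R * X = fromBlocks (Q * K * Qᴴ) Q Qᴴ R := by
    rw [conjTranspose_fromCols_eq_fromRows_conjTranspose, fromRows_mul, fromRows_mul_fromCols]
    simp only [conjTranspose_one, conjTranspose_mul, hK.eq, conjTranspose_conjTranspose,
      Matrix.one_mul, Matrix.mul_one, Matrix.mul_assoc, hRKQ, hQKR]
  exact hX ▸ hR.conjTranspose_mul_mul_same X

theorem PosSemidef.fromBlocks_sub_of_fromBlocks_fromRows_zero [Fintype l] [DecidableEq l]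
    [DecidableEq m] {P₁₁ : Matrix l l 𝕜} {P₁₂ : Matrix l m 𝕜}
    (hM : (fromBlocks (fromBlocks P₁₁ P₁₂ P₁₂ᴴ P) (fromRows (0 : Matrix l n 𝕜) Q)
      (fromRows 0 Q)ᴴ R).PosSemidef) (hK : K.IsHermitian) (hKRK : K * R * K = K) :
    (fromBlocks P₁₁ P₁₂ P₁₂ᴴ (P - Q * K * Qᴴ)).PosSemidef := by
  have hQ : fromRows (0 : Matrix l n 𝕜) Q * K * (fromRows (0 : Matrix l n 𝕜) Q)ᴴ =
      fromBlocks 0 0 0 (Q * K * Qᴴ) := by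
    rw [conjTranspose_fromRows_eq_fromCols_conjTranspose, fromRows_mul, fromRows_mul_fromCols]
    simp
  have := hM.sub_mul_mul_conjTranspose hK hKRK
  rw [hQ, sub_eq_add_neg, fromBlocks_neg, fromBlocks_add] at this
  simpa [← sub_eq_add_neg] using this

end GeneralizedSchurComplement

end Matrix

theorem exists_separation_matrix_general {d : ℕ} (M : Matrix (Fin d) (Fin d) ℝ)
    (A B C : Finset (Fin d))
    (hM : M.PosSemidef)
    (hzero : ∀ i ∈ A, ∀ j ∈ C, M i j = 0)
    (N : Matrix {x // x ∈ B} {x // x ∈ B} ℝ) (hN : N.IsSymm) :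
    ∃ S : Matrix {x // x ∈ B} {x // x ∈ B} ℝ, S.IsSymm ∧
      (Matrix.fromBlocks
        (M.submatrix (Subtype.val : {x // x ∈ A} → Fin d) (Subtype.val : {x // x ∈ A} → Fin d))
        (M.submatrix (Subtype.val : {x // x ∈ A} → Fin d) (Subtype.val : {x // x ∈ B} → Fin d))
        (M.submatrix (Subtype.val : {x // x ∈ A} → Fin d) (Subtype.val : {x // x ∈ B} → Fin d)).transpose
        (N - S)).PosSemidef ∧
      (Matrix.fromBlocks
        (M.submatrix (Subtype.val : {x // x ∈ B} → Fin d) (Subtype.val : {x // x ∈ B} → Fin d)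
          - N + S)
        (M.submatrix (Subtype.val : {x // x ∈ B} → Fin d) (Subtype.val : {x // x ∈ C} → Fin d))
        (M.submatrix (Subtype.val : {x // x ∈ B} → Fin d) (Subtype.val : {x // x ∈ C} → Fin d)).transpose
        (M.submatrix (Subtype.val : {x // x ∈ C} → Fin d) (Subtype.val : {x // x ∈ C} → Fin d))
        ).PosSemidef := by
  set a := (Subtype.val : {x // x ∈ A} → Fin d)
  set b := (Subtype.val : {x // x ∈ B} → Fin d)
  set c := (Subtype.val : {x // x ∈ C} → Fin d)
  have hsub {ι κ : Type} (f : ι → Fin d) (g : κ → Fin d) :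
      (M.submatrix f g)ᴴ = M.submatrix g f := by
    rw [conjTranspose_submatrix, hM.1.eq]
  have hac : M.submatrix a c = 0 := by
    ext i j
    exact hzero i i.2 j j.2
  obtain ⟨K, hK, hCKC, hKCK⟩ := (hM.submatrix c).isHermitian.exists_isHermitian_mul_mul_eq_self
  set T := M.submatrix b c * K * (M.submatrix b c)ᴴ
  refine ⟨N - M.submatrix b b + T, ?_, ?_, ?_⟩
  · have hBB : (M.submatrix b b).IsSymm := isHermitian_iff_isSymm.mp (hM.submatrix b).1
    have hT : T.IsSymm := isHermitian_iff_isSymm.mp (isHermitian_mul_mul_conjTranspose _ hK)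
    exact (hN.sub hBB).add hT
  · have h := hM.submatrix (Sum.elim (Sum.elim a b) c)
    rw [submatrix_sumElim_sumElim, submatrix_sumElim_sumElim, ← hsub (Sum.elim a b) c,
      submatrix_sumElim_left, hac, ← hsub a b] at h
    rw [show N - (N - M.submatrix b b + T) = M.submatrix b b - T by abel,
      ← conjTranspose_eq_transpose_of_trivial]
    exact h.fromBlocks_sub_of_fromBlocks_fromRows_zero hK hKCK
  · have h := hM.submatrix (Sum.elim b c)
    rw [submatrix_sumElim_sumElim, ← hsub b c] at h
    rw [show M.submatrix b b - N + (N - M.submatrix b b + T) = T by abel,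
      ← conjTranspose_eq_transpose_of_trivial]
    exact h.fromBlocks_mul_mul_conjTranspose hK hCKC

/-- For a symmetric PSD matrix `M` with block structure indexed by a
partition `(A, B, C)` of the index set, with the `(A,C)`-block zero, and any symmetric
matrix `N` indexed by `B × B`, there is a symmetric matrix `S` indexed by `B × B` such
that `[[M_AA, M_AB],[M_ABᵀ, N - S]]` and `[[M_BB - N + S, M_BC],[M_BCᵀ, M_CC]]` are
both positive semidefinite. -/
theorem exists_separation_matrix {d : ℕ} (M : Matrix (Fin d) (Fin d) ℝ)
    (A B C : Finset (Fin d))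
    (hAB : Disjoint A B) (hAC : Disjoint A C) (hBC : Disjoint B C)
    (hU : A ∪ B ∪ C = Finset.univ)
    (hM : M.PosSemidef)
    (hzero : ∀ i ∈ A, ∀ j ∈ C, M i j = 0)
    (N : Matrix {x // x ∈ B} {x // x ∈ B} ℝ) (hN : N.IsSymm) :
    ∃ S : Matrix {x // x ∈ B} {x // x ∈ B} ℝ, S.IsSymm ∧
      (Matrix.fromBlocks
        (M.submatrix (Subtype.val : {x // x ∈ A} → Fin d) (Subtype.val : {x // x ∈ A} → Fin d))
        (M.submatrix (Subtype.val : {x // x ∈ A} → Fin d) (Subtype.val : {x // x ∈ B} → Fin d))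
        (M.submatrix (Subtype.val : {x // x ∈ A} → Fin d) (Subtype.val : {x // x ∈ B} → Fin d)).transpose
        (N - S)).PosSemidef ∧
      (Matrix.fromBlocks
        (M.submatrix (Subtype.val : {x // x ∈ B} → Fin d) (Subtype.val : {x // x ∈ B} → Fin d)
          - N + S)
        (M.submatrix (Subtype.val : {x // x ∈ B} → Fin d) (Subtype.val : {x // x ∈ C} → Fin d))
        (M.submatrix (Subtype.val : {x // x ∈ B} → Fin d) (Subtype.val : {x // x ∈ C} → Fin d)).transpose
        (M.submatrix (Subtype.val : {x // x ∈ C} → Fin d) (Subtype.val : {x // x ∈ C} → Fin d))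
        ).PosSemidef :=
  exists_separation_matrix_general M A B C hM hzero N hN
end

section
/- Let M = [[A, B],[B^T, C]] be a symmetric real block matrix. Then M is positive semidefinite if and only if C is positive semidefinite, (I − C C^†) B^T = 0, and the generalized Schur complement A − B C^† B^T is positive semidefinite, where C^† denotes the Moore–Penrose pseudoinverse of C. -/
/-!
If the columns of `Bᴴ` lie in the range of `C`, in the form `C * G * Bᴴ = Bᴴ`, then with the
invertible `X = [[1, B Gᴴ], [0, 1]]` one has `[[A, B], [Bᴴ, C]] = X * diag(A - B G Bᴴ, C) * Xᴴ`,
so the block matrix is positive semidefinite iff `C` and the Schur complement `A - B G Bᴴ` are.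

The range condition is forced by positivity: if `C y = 0`, the quadratic form of the block matrix
vanishes at `(0, y)`, so `(0, y)` is in its kernel and `B y = 0`. Applied to the columns of
`1 - Gᴴ C`, which `C` kills because `C G C = C`, this gives `B = B Gᴴ C`.
-/

open Matrix
open scoped ComplexOrder

namespace Matrix

variable {m n 𝕜 : Type*} [Fintype m] [Fintype n] [RCLike 𝕜]
  {A : Matrix n n 𝕜} {B : Matrix n m 𝕜} {C : Matrix m m 𝕜}

theorem posSemidef_fromBlocks_zero_iff {D : Matrix m m 𝕜} :
    (fromBlocks A 0 0 D).PosSemidef ↔ A.PosSemidef ∧ D.PosSemidef := by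
  refine ⟨fun h ↦ ⟨h.submatrix Sum.inl, h.submatrix Sum.inr⟩, ?_⟩
  rintro ⟨hA, hD⟩
  refine .of_dotProduct_mulVec_nonneg (hA.isHermitian.fromBlocks (by simp) hD.isHermitian) ?_
  intro x
  rw [← Sum.elim_comp_inl_inr x]
  simp only [fromBlocks_mulVec, dotProduct_block, Sum.elim_comp_inl, Sum.elim_comp_inr,
    zero_mulVec, add_zero, zero_add, Function.star_sumElim]
  exact add_nonneg (hA.dotProduct_mulVec_nonneg _) (hD.dotProduct_mulVec_nonneg _)

theorem fromBlocks_eq_mul_mul_conjTranspose [DecidableEq n] [DecidableEq m] {G : Matrix m m 𝕜}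
    (hC : C.IsHermitian) (hB : C * G * Bᴴ = Bᴴ) :
    fromBlocks A B Bᴴ C = fromBlocks 1 (B * Gᴴ) 0 1 * fromBlocks (A - B * G * Bᴴ) 0 0 C *
      (fromBlocks 1 (B * Gᴴ) 0 1)ᴴ := by
  have hB' : B * Gᴴ * C = B := by
    simpa [Matrix.mul_assoc, hC.eq] using congrArg conjTranspose hB
  rw [fromBlocks_conjTranspose, fromBlocks_multiply, fromBlocks_multiply]
  congr 1 <;> simp [hB', ← Matrix.mul_assoc, hB]

theorem posSemidef_fromBlocks_iff_of_mul_mul_conjTranspose_eq {G : Matrix m m 𝕜}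
    (hC : C.IsHermitian) (hB : C * G * Bᴴ = Bᴴ) :
    (fromBlocks A B Bᴴ C).PosSemidef ↔ C.PosSemidef ∧ (A - B * G * Bᴴ).PosSemidef := by
  classical
  rw [fromBlocks_eq_mul_mul_conjTranspose hC hB, ← star_eq_conjTranspose (fromBlocks 1 _ 0 1),
    IsUnit.posSemidef_star_right_conjugate_iff (by simp), posSemidef_fromBlocks_zero_iff, and_comm]

theorem PosSemidef.mulVec_eq_zero_of_fromBlocks {y : m → 𝕜}
    (hM : (fromBlocks A B Bᴴ C).PosSemidef) (hy : C *ᵥ y = 0) : B *ᵥ y = 0 := by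
  have hx : star (Sum.elim 0 y) ⬝ᵥ fromBlocks A B Bᴴ C *ᵥ Sum.elim 0 y = 0 := by
    simp [fromBlocks_mulVec, dotProduct_block, hy, Function.star_sumElim]
  funext i
  simpa [fromBlocks_mulVec] using congrFun ((hM.dotProduct_mulVec_zero_iff _).mp hx) (Sum.inl i)

theorem PosSemidef.mul_eq_zero_of_fromBlocks_s3 {N : Matrix m m 𝕜}
    (hM : (fromBlocks A B Bᴴ C).PosSemidef) (hN : C * N = 0) : B * N = 0 := by
  refine ext_iff_mulVec.mpr fun v ↦ ?_
  rw [← mulVec_mulVec, hM.mulVec_eq_zero_of_fromBlocks (by rw [mulVec_mulVec, hN, zero_mulVec]),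
    zero_mulVec]

theorem PosSemidef.mul_mul_conjTranspose_eq_of_fromBlocks {G : Matrix m m 𝕜}
    (hM : (fromBlocks A B Bᴴ C).PosSemidef) (hC : C.IsHermitian) (hG : C * G * C = C) :
    C * G * Bᴴ = Bᴴ := by
  classical
  have hBGC : B * (1 - Gᴴ * C) = 0 := hM.mul_eq_zero_of_fromBlocks_s3 <| by
    simpa [mul_sub, ← Matrix.mul_assoc, hC.eq, sub_eq_zero, eq_comm] using congrArg (·ᴴ) hG
  rw [Matrix.mul_sub, Matrix.mul_one, sub_eq_zero] at hBGC
  simpa [Matrix.mul_assoc, hC.eq] using congrArg (·ᴴ) hBGC.symm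

theorem posSemidef_fromBlocks_iff_of_mul_mul_eq [DecidableEq m] {G : Matrix m m 𝕜}
    (hG : C * G * C = C) :
    (fromBlocks A B Bᴴ C).PosSemidef ↔
      C.PosSemidef ∧ (1 - C * G) * Bᴴ = 0 ∧ (A - B * G * Bᴴ).PosSemidef := by
  rw [Matrix.sub_mul, Matrix.one_mul, sub_eq_zero, eq_comm]
  constructor
  · intro hM
    have hC : C.PosSemidef := hM.submatrix Sum.inr
    have hB := hM.mul_mul_conjTranspose_eq_of_fromBlocks hC.isHermitian hG
    rw [posSemidef_fromBlocks_iff_of_mul_mul_conjTranspose_eq hC.isHermitian hB] at hM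
    exact ⟨hC, hB, hM.2⟩
  · rintro ⟨hC, hB, hS⟩
    exact (posSemidef_fromBlocks_iff_of_mul_mul_conjTranspose_eq hC.isHermitian hB).mpr ⟨hC, hS⟩

end Matrix

theorem posSemidef_fromBlocks_iff_schur_general {n m : Type*}
    [Fintype n] [Fintype m] [DecidableEq m]
    (A : Matrix n n ℝ) (B : Matrix n m ℝ) (C Cd : Matrix m m ℝ)
    (h1 : C * Cd * C = C) :
    (Matrix.fromBlocks A B B.transpose C).PosSemidef ↔
      C.PosSemidef ∧ (1 - C * Cd) * B.transpose = 0 ∧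
        (A - B * Cd * B.transpose).PosSemidef := by
  rw [← conjTranspose_eq_transpose_of_trivial]
  exact posSemidef_fromBlocks_iff_of_mul_mul_eq h1

/-- generalized Schur complement criterion for positive semidefiniteness of
a symmetric block matrix `[[A, B],[Bᵀ, C]]`, where `Cd` is the Moore–Penrose
pseudoinverse of `C` (characterized by the Penrose conditions). -/
theorem posSemidef_fromBlocks_iff_schur {n m : Type*}
    [Fintype n] [Fintype m] [DecidableEq n] [DecidableEq m]
    (A : Matrix n n ℝ) (B : Matrix n m ℝ) (C Cd : Matrix m m ℝ)
    (hA : A.IsSymm) (hC : C.IsSymm)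
    (h1 : C * Cd * C = C) (h2 : Cd * C * Cd = Cd)
    (h3 : (C * Cd).IsSymm) (h4 : (Cd * C).IsSymm) :
    (Matrix.fromBlocks A B B.transpose C).PosSemidef ↔
      C.PosSemidef ∧ (1 - C * Cd) * B.transpose = 0 ∧
        (A - B * Cd * B.transpose).PosSemidef :=
  posSemidef_fromBlocks_iff_schur_general A B C Cd h1
end

section
/- Let G = (V, E) be a graph with vertex set V = {1,...,d} and maximal cliques C_1, ..., C_t. Suppose f : R^d → R is given by f(x) = (x−μ)^T K (x−μ) for a symmetric positive semidefinite matrix K and μ ∈ R^d, and suppose f(x) = Σ_{i=1}^t g_i(x_{C_i}) for some functions g_i : R^{C_i} → R (each g_i depends only on the coordinates in C_i). Then for all ℓ, m ∈ V with ℓ ≠ m and {ℓ, m} ∉ E, the entry K_{ℓm} equals 0. -/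
/-!
Take the mixed second difference `f(x+u+v) - f(x+u) - f(x+v) + f(x)` in the directions
`u = e_ℓ`, `v = e_m`. On the quadratic form it is `K ℓ m + K m ℓ = 2 K ℓ m`. On the right-hand
side it kills every `g_i`: since `ℓ` and `m` are not adjacent, no clique contains both, and a
function that ignores one of the two coordinates has vanishing mixed difference.
-/

open Matrix Function

section MixedDiff

variable {ι R β : Type*} [AddCommGroup β]

def mixedDiff [Add R] (f : (ι → R) → β) (x u v : ι → R) : β :=
  f (x + u + v) - f (x + u) - f (x + v) + f x

theorem mixedDiff_comm [AddCommMonoid R] (f : (ι → R) → β) (x u v : ι → R) :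
    mixedDiff f x u v = mixedDiff f x v u := by
  rw [mixedDiff, mixedDiff, add_right_comm x u v]
  abel

theorem mixedDiff_sum [Add R] {κ : Type*} (s : Finset κ) (f : κ → (ι → R) → β)
    (x u v : ι → R) :
    mixedDiff (fun y ↦ ∑ k ∈ s, f k y) x u v = ∑ k ∈ s, mixedDiff (f k) x u v := by
  simp only [mixedDiff, Finset.sum_add_distrib, Finset.sum_sub_distrib]

theorem DependsOn.mixedDiff_eq_zero [AddCommMonoid R] {f : (ι → R) → β} {s : Set ι}
    (hf : DependsOn f s) {u : ι → R} (hu : ∀ i ∈ s, u i = 0) (x v : ι → R) :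
    mixedDiff f x u v = 0 := by
  have hxu : f (x + u) = f x := hf fun i hi ↦ by simp [hu i hi]
  have hxuv : f (x + u + v) = f (x + v) := hf fun i hi ↦ by simp [hu i hi]
  rw [mixedDiff, hxu, hxuv]
  abel

theorem DependsOn.mixedDiff_single_eq_zero [AddCommMonoid R] [DecidableEq ι]
    {f : (ι → R) → β} {s : Set ι} (hf : DependsOn f s) {ℓ m : ι} (h : ℓ ∉ s ∨ m ∉ s)
    (x : ι → R) (a b : R) :
    mixedDiff f x (Pi.single ℓ a) (Pi.single m b) = 0 := by
  have single_eq_zero {j : ι} {c : R} (hj : j ∉ s) : ∀ i ∈ s, (Pi.single j c : ι → R) i = 0 :=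
    fun i hi ↦ Pi.single_eq_of_ne (ne_of_mem_of_not_mem hi hj) _
  rcases h with hℓ | hm
  · exact hf.mixedDiff_eq_zero (single_eq_zero hℓ) x _
  · rw [mixedDiff_comm]
    exact hf.mixedDiff_eq_zero (single_eq_zero hm) x _

end MixedDiff

theorem mixedDiff_quadratic {ι R : Type*} [Fintype ι] [CommRing R] (K : Matrix ι ι R)
    (μ x u v : ι → R) :
    mixedDiff (fun y ↦ (y - μ) ⬝ᵥ K *ᵥ (y - μ)) x u v = u ⬝ᵥ K *ᵥ v + v ⬝ᵥ K *ᵥ u := by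
  simp only [mixedDiff, add_sub_right_comm _ _ μ, mulVec_add, dotProduct_add, add_dotProduct]
  ring

theorem single_dotProduct_mulVec_single {ι R : Type*} [Fintype ι] [DecidableEq ι] [NonAssocSemiring R]
    (K : Matrix ι ι R) (ℓ m : ι) :
    Pi.single ℓ 1 ⬝ᵥ K *ᵥ Pi.single m 1 = K ℓ m := by
  simp

theorem quadratic_clique_decomposition_offdiag_zero_general {d t : ℕ}
    (G : SimpleGraph (Fin d)) (C : Fin t → Finset (Fin d))
    (hclique : ∀ i, G.IsClique (C i : Set (Fin d)))
    (K : Matrix (Fin d) (Fin d) ℝ) (hK : K.PosSemidef) (μ : Fin d → ℝ)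
    (g : Fin t → (Fin d → ℝ) → ℝ)
    (hdep : ∀ i (x y : Fin d → ℝ), (∀ v ∈ C i, x v = y v) → g i x = g i y)
    (hsum : ∀ x : Fin d → ℝ,
      dotProduct (x - μ) (K.mulVec (x - μ)) = ∑ i, g i x) :
    ∀ ℓ m : Fin d, ℓ ≠ m → ¬ G.Adj ℓ m → K ℓ m = 0 := by
  intro ℓ m hne hadj
  have hsep (i : Fin t) : ℓ ∉ C i ∨ m ∉ C i := by
    by_contra! h
    exact hadj (hclique i h.1 h.2 hne)
  have h := congrArg (mixedDiff · 0 (Pi.single ℓ 1) (Pi.single m 1)) (funext hsum)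
  simp only [mixedDiff_quadratic, mixedDiff_sum, single_dotProduct_mulVec_single] at h
  rw [Finset.sum_eq_zero fun i _ ↦ DependsOn.mixedDiff_single_eq_zero (hdep i) (hsep i) _ 1 1,
    ← hK.isHermitian.apply m ℓ, star_trivial] at h
  linarith

/-- if a PSD quadratic form `(x-μ)ᵀ K (x-μ)` decomposes as a sum of
functions, one for each maximal clique of a graph `G` and depending only on the
coordinates of that clique, then `K_{ℓm} = 0` for every non-adjacent pair `ℓ ≠ m`. -/
theorem quadratic_clique_decomposition_offdiag_zero {d t : ℕ}
    (G : SimpleGraph (Fin d)) (C : Fin t → Finset (Fin d))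
    (hclique : ∀ i, G.IsClique (C i : Set (Fin d)))
    (hmaximal : ∀ i, ∀ s : Finset (Fin d), G.IsClique (s : Set (Fin d)) → C i ⊆ s → s = C i)
    (hall : ∀ s : Finset (Fin d), G.IsClique (s : Set (Fin d)) →
      (∀ s' : Finset (Fin d), G.IsClique (s' : Set (Fin d)) → s ⊆ s' → s' = s) →
      ∃ i, C i = s)
    (K : Matrix (Fin d) (Fin d) ℝ) (hK : K.PosSemidef) (μ : Fin d → ℝ)
    (g : Fin t → (Fin d → ℝ) → ℝ)
    (hdep : ∀ i (x y : Fin d → ℝ), (∀ v ∈ C i, x v = y v) → g i x = g i y)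
    (hsum : ∀ x : Fin d → ℝ,
      dotProduct (x - μ) (K.mulVec (x - μ)) = ∑ i, g i x) :
    ∀ ℓ m : Fin d, ℓ ≠ m → ¬ G.Adj ℓ m → K ℓ m = 0 :=
  quadratic_clique_decomposition_offdiag_zero_general G C hclique K hK μ g hdep hsum
end

section
/- Let G be a chordal graph with d vertices and maximal cliques C_1,...,C_t ordered to satisfy the running intersection property: for each i ∈ [t−1] there is j > i with C_i ∩ (C_{i+1} ∪ ... ∪ C_t) ⊆ C_j. Let f : R^d → R be convex with f(x) = Σ_{i=1}^t g_i(x_{C_i}). Suppose that for each i ∈ [t−1] there exist vectors a^{(i)} ∈ R^{C_i \ C_{[i+1,t]}} and b^{(i)} ∈ R^{C_{[i+1,t]} \ C_i} such that the function of x_{C_i} given by f(a^{(1)},...,a^{(i−1)}, x_{C_i \ C_{[i+1,t]}}, x_{C_i ∩ C_{[i+1,t]}}, b^{(i)}) − f(a^{(1)},...,a^{(i−1)}, a^{(i)}, x_{C_i ∩ C_{[i+1,t]}}, b^{(i)}) is convex on R^{C_i}. Then there exist convex functions ĝ_i : R^{C_i} → R, i = 1,...,t, with f = Σ_{i=1}^t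 ĝ_i(x_{C_i}). -/
/-- The union of the cliques with index larger than `i`, i.e. `C_{[i+1,t]}`. -/
def laterUnion {d t : ℕ} (C : Fin t → Finset (Fin d)) (i : Fin t) : Finset (Fin d) :=
  (Finset.univ.filter fun j => i < j).biUnion C

/-- The point `(a^{(1)},...,a^{(i-1)}, x_{C_i}, b^{(i)})` of `ℝ^d`: coordinates in `C_i`
come from `x`, coordinates in `C_{[i+1,t]} \ C_i` come from `b^{(i)}`, and coordinates in
`C_j \ C_{[j+1,t]}` for `j < i` come from `a^{(j)}`. -/
noncomputable def gluePoint {d t : ℕ} (C : Fin t → Finset (Fin d))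
    (a b : Fin t → Fin d → ℝ) (i : Fin t) (x : Fin d → ℝ) : Fin d → ℝ :=
  fun v =>
    if v ∈ C i then x v
    else if v ∈ laterUnion C i then b i v
    else if h : ∃ j : Fin t, j < i ∧ v ∈ C j ∧ v ∉ laterUnion C j then a h.choose v
    else 0

section Aux

variable {d t : ℕ} {C : Fin t → Finset (Fin d)} {a b b' : Fin t → Fin d → ℝ}

lemma mem_laterUnion {i : Fin t} {v : Fin d} :
    v ∈ laterUnion C i ↔ ∃ j, i < j ∧ v ∈ C j := by
  simp [laterUnion]

lemma glueTopUnique {v : Fin d} {m m' : Fin t} (h1 : v ∈ C m) (h2 : v ∉ laterUnion C m)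
    (h3 : v ∈ C m') (h4 : v ∉ laterUnion C m') : m = m' := by
  rcases lt_trichotomy m m' with h | h | h
  · exact absurd (mem_laterUnion.2 ⟨m', h, h3⟩) h2
  · exact h
  · exact absurd (mem_laterUnion.2 ⟨m, h, h1⟩) h4

lemma exists_top {v : Fin d} {j : Fin t} (h : v ∈ C j) :
    ∃ m, j ≤ m ∧ v ∈ C m ∧ v ∉ laterUnion C m := by
  classical
  set S := Finset.univ.filter (fun k : Fin t => v ∈ C k) with hS
  have hne : S.Nonempty := ⟨j, by simp [hS, h]⟩
  refine ⟨S.max' hne, ?_, ?_, ?_⟩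
  · exact S.le_max' j (by simp [hS, h])
  · have := S.max'_mem hne
    simp only [hS, Finset.mem_filter] at this
    exact this.2
  · intro hl
    obtain ⟨m, hm, hvm⟩ := mem_laterUnion.1 hl
    exact absurd (S.le_max' m (by simp [hS, hvm])) (not_le.2 hm)

lemma glue_of_mem {i : Fin t} {x : Fin d → ℝ} {v : Fin d} (h : v ∈ C i) :
    gluePoint C a b i x v = x v := by simp [gluePoint, h]

lemma glue_of_later {i : Fin t} {x : Fin d → ℝ} {v : Fin d}
    (h1 : v ∉ C i) (h2 : v ∈ laterUnion C i) : gluePoint C a b i x v = b i v := by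
  simp [gluePoint, h1, h2]

lemma glue_else {i : Fin t} {x x' : Fin d → ℝ} {v : Fin d}
    (h1 : v ∉ C i) (h2 : v ∉ laterUnion C i) :
    gluePoint C a b i x v = gluePoint C a b' i x' v := by
  simp [gluePoint, h1, h2]

lemma glue_of_top {i : Fin t} {x : Fin d → ℝ} {v : Fin d} {m : Fin t}
    (h1 : v ∉ C i) (h2 : v ∉ laterUnion C i)
    (hm : m < i) (h3 : v ∈ C m) (h4 : v ∉ laterUnion C m) :
    gluePoint C a b i x v = a m v := by
  have hex : ∃ j : Fin t, j < i ∧ v ∈ C j ∧ v ∉ laterUnion C j := ⟨m, hm, h3, h4⟩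
  have hc : hex.choose = m := glueTopUnique hex.choose_spec.2.1 hex.choose_spec.2.2 h3 h4
  simp only [gluePoint, if_neg h1, if_neg h2, dif_pos hex, hc]

lemma glue_congr {i : Fin t} {x y : Fin d → ℝ} (h : ∀ v ∈ C i, x v = y v) :
    gluePoint C a b i x = gluePoint C a b i y := by
  funext v
  by_cases hv : v ∈ C i
  · rw [glue_of_mem hv, glue_of_mem hv]; exact h v hv
  · by_cases hl : v ∈ laterUnion C i
    · rw [glue_of_later hv hl, glue_of_later hv hl]
    · exact glue_else hv hl

lemma convexOn_glue {f : (Fin d → ℝ) → ℝ} (hf : ConvexOn ℝ Set.univ f)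
    (C : Fin t → Finset (Fin d)) (a b : Fin t → Fin d → ℝ) (i : Fin t) :
    ConvexOn ℝ Set.univ (fun x => f (gluePoint C a b i x)) := by
  refine ⟨convex_univ, fun x _ y _ p q hp hq hpq => ?_⟩
  have key : gluePoint C a b i (p • x + q • y)
      = p • gluePoint C a b i x + q • gluePoint C a b i y := by
    funext v
    simp only [Pi.add_apply, Pi.smul_apply, smul_eq_mul]
    by_cases hv : v ∈ C i
    · rw [glue_of_mem hv, glue_of_mem hv, glue_of_mem hv]
      simp [Pi.add_apply, Pi.smul_apply, smul_eq_mul]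
    · by_cases hl : v ∈ laterUnion C i
      · rw [glue_of_later hv hl, glue_of_later hv hl, glue_of_later hv hl,
          ← add_mul, hpq, one_mul]
      · rw [show gluePoint C a b i (p • x + q • y) v = gluePoint C a b i x v from
            glue_else hv hl,
          show gluePoint C a b i y v = gluePoint C a b i x v from glue_else hv hl,
          ← add_mul, hpq, one_mul]
  dsimp only
  rw [key]
  exact hf.2 (Set.mem_univ _) (Set.mem_univ _) hp hq hpq

end Aux

section Aux2

variable {d t : ℕ} {C : Fin t → Finset (Fin d)} {a b : Fin t → Fin d → ℝ}

lemma no_bad (hRIP : ∀ i : Fin t, i.val + 1 < t →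
      ∃ j : Fin t, i < j ∧ C i ∩ laterUnion C i ⊆ C j) :
    ∀ n : ℕ, ∀ j k : Fin t, j < k → k.val - j.val ≤ n →
      ∀ u, u ∈ C j → u ∈ C k → u ∉ laterUnion C k →
      ∀ w, w ∈ C j → w ∈ laterUnion C k → w ∉ C k → False := by
  intro n
  induction n with
  | zero =>
    intro j k hjk hle u _ _ _ w _ _ _
    have h1 : j.val < k.val := hjk
    omega
  | succ n ih =>
    intro j k hjk hle u hu1 hu2 hu3 w hw1 hw2 hw3
    have hjkv : j.val < k.val := hjk
    have hkt : k.val < t := k.isLt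
    obtain ⟨k1, hjk1, hsub⟩ := hRIP j (by omega)
    have hu_l : u ∈ laterUnion C j := mem_laterUnion.2 ⟨k, hjk, hu2⟩
    obtain ⟨m, hkm, hwm⟩ := mem_laterUnion.1 hw2
    have hw_l : w ∈ laterUnion C j := mem_laterUnion.2 ⟨m, lt_trans hjk hkm, hwm⟩
    have hu4 : u ∈ C k1 := hsub (Finset.mem_inter.2 ⟨hu1, hu_l⟩)
    have hw4 : w ∈ C k1 := hsub (Finset.mem_inter.2 ⟨hw1, hw_l⟩)
    have hk1k : k1 < k := by
      rcases lt_trichotomy k1 k with h | h | h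
      · exact h
      · exact absurd (h ▸ hw4) hw3
      · exact absurd (mem_laterUnion.2 ⟨k1, h, hu4⟩) hu3
    have hjk1v : j.val < k1.val := hjk1
    have hk1kv : k1.val < k.val := hk1k
    exact ih k1 k hk1k (by omega) u hu4 hu2 hu3 w hw4 hw2 hw3

lemma dichotomy (hRIP : ∀ i : Fin t, i.val + 1 < t →
      ∃ j : Fin t, i < j ∧ C i ∩ laterUnion C i ⊆ C j)
    {j k : Fin t} (hjk : j < k) :
    (∀ w ∈ C j, w ∈ laterUnion C k → w ∈ C k) ∨
    (∀ u ∈ C j, u ∈ C k → u ∈ laterUnion C k) := by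
  by_cases h : ∀ w ∈ C j, w ∈ laterUnion C k → w ∈ C k
  · exact Or.inl h
  · refine Or.inr fun u hu1 hu2 => ?_
    by_contra hu3
    push_neg at h
    obtain ⟨w, hw1, hw2, hw3⟩ := h
    exact no_bad hRIP (k.val - j.val) j k hjk le_rfl u hu1 hu2 hu3 w hw1 hw2 hw3

lemma step_eq (hRIP : ∀ i : Fin t, i.val + 1 < t →
      ∃ j : Fin t, i < j ∧ C i ∩ laterUnion C i ⊆ C j)
    {g : Fin t → (Fin d → ℝ) → ℝ}
    (hdep : ∀ i (x y : Fin d → ℝ), (∀ v ∈ C i, x v = y v) → g i x = g i y)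
    (x : Fin d → ℝ) (k k' : Fin t) (hkk' : k'.val = k.val + 1) (j : Fin t) :
    g j (gluePoint C a (fun _ => x) k x)
      + g j (gluePoint C a b k (fun v => if v ∈ laterUnion C k then x v else a k v))
    = g j (gluePoint C a b k x) + g j (gluePoint C a (fun _ => x) k' x) := by
  have hkk'lt : k < k' := by rw [Fin.lt_def]; omega
  have hlater : ∀ v : Fin d, v ∈ laterUnion C k ↔ v ∈ C k' ∨ v ∈ laterUnion C k' := by
    intro v
    rw [mem_laterUnion, mem_laterUnion]
    constructor
    · rintro ⟨m, hm, hvm⟩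
      have hmv : k.val < m.val := hm
      rcases eq_or_lt_of_le (show k'.val ≤ m.val by omega) with h | h
      · exact Or.inl ((Fin.ext h : k' = m) ▸ hvm)
      · exact Or.inr ⟨m, by rwa [Fin.lt_def], hvm⟩
    · rintro (h | ⟨m, hm, hvm⟩)
      · exact ⟨k', hkk'lt, h⟩
      · exact ⟨m, lt_trans hkk'lt hm, hvm⟩
  have hPk'_later : ∀ v, v ∈ laterUnion C k →
      gluePoint C a (fun _ => x) k' x v = x v := by
    intro v hv
    by_cases h1 : v ∈ C k'
    · exact glue_of_mem h1
    · exact glue_of_later h1 (((hlater v).1 hv).resolve_left h1)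
  have hPk_mem : ∀ v, v ∈ C k ∨ v ∈ laterUnion C k →
      gluePoint C a (fun _ => x) k x v = x v := by
    intro v hv
    by_cases h1 : v ∈ C k
    · exact glue_of_mem h1
    · exact glue_of_later h1 (hv.resolve_left h1)
  have hPk'_top : ∀ v, v ∈ C k → v ∉ laterUnion C k →
      gluePoint C a (fun _ => x) k' x v = a k v := by
    intro v hv hl
    have h1 : v ∉ C k' := fun h => hl ((hlater v).2 (Or.inl h))
    have h2 : v ∉ laterUnion C k' := fun h => hl ((hlater v).2 (Or.inr h))
    exact glue_of_top h1 h2 hkk'lt hv hl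
  have hfar : ∀ v, v ∈ C j → v ∉ C k → v ∉ laterUnion C k →
      ∃ m : Fin t, m < k ∧ v ∈ C m ∧ v ∉ laterUnion C m := by
    intro v hv h1 h2
    obtain ⟨m, _, hm2, hm3⟩ := exists_top hv
    refine ⟨m, ?_, hm2, hm3⟩
    rcases lt_trichotomy m k with h | h | h
    · exact h
    · exact absurd (h ▸ hm2) h1
    · exact absurd (mem_laterUnion.2 ⟨m, h, hm2⟩) h2
  rcases lt_trichotomy j k with hjk | rfl | hkj
  · rcases dichotomy hRIP hjk with hc | hc
    · have h1 : g j (gluePoint C a (fun _ => x) k x) = g j (gluePoint C a b k x) := by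
        refine hdep j _ _ fun v hv => ?_
        by_cases hm : v ∈ C k
        · rw [glue_of_mem hm, glue_of_mem hm]
        · exact glue_else hm fun h => hm (hc v hv h)
      have h2 : g j (gluePoint C a b k (fun v => if v ∈ laterUnion C k then x v else a k v))
          = g j (gluePoint C a (fun _ => x) k' x) := by
        refine hdep j _ _ fun v hv => ?_
        by_cases hm : v ∈ C k
        · rw [glue_of_mem hm]
          by_cases hl : v ∈ laterUnion C k
          · rw [if_pos hl, hPk'_later v hl]
          · rw [if_neg hl, hPk'_top v hm hl]
        · have hl : v ∉ laterUnion C k := fun h => hm (hc v hv h)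
          obtain ⟨m, hmk, hm2, hm3⟩ := hfar v hv hm hl
          have h1' : v ∉ C k' := fun h => hl ((hlater v).2 (Or.inl h))
          have h2' : v ∉ laterUnion C k' := fun h => hl ((hlater v).2 (Or.inr h))
          rw [glue_of_top hm hl hmk hm2 hm3,
            glue_of_top h1' h2' (lt_trans hmk hkk'lt) hm2 hm3]
      rw [h1, h2]
    · have h1 : g j (gluePoint C a (fun _ => x) k x)
          = g j (gluePoint C a (fun _ => x) k' x) := by
        refine hdep j _ _ fun v hv => ?_
        by_cases hl : v ∈ laterUnion C k
        · rw [hPk_mem v (Or.inr hl), hPk'_later v hl]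
        · have hm : v ∉ C k := fun h => hl (hc v hv h)
          obtain ⟨m, hmk, hm2, hm3⟩ := hfar v hv hm hl
          have h1' : v ∉ C k' := fun h => hl ((hlater v).2 (Or.inl h))
          have h2' : v ∉ laterUnion C k' := fun h => hl ((hlater v).2 (Or.inr h))
          rw [glue_of_top hm hl hmk hm2 hm3,
            glue_of_top h1' h2' (lt_trans hmk hkk'lt) hm2 hm3]
      have h2 : g j (gluePoint C a b k x)
          = g j (gluePoint C a b k (fun v => if v ∈ laterUnion C k then x v else a k v)) := by
        refine hdep j _ _ fun v hv => ?_
        by_cases hm : v ∈ C k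
        · rw [glue_of_mem hm, glue_of_mem hm, if_pos (hc v hv hm)]
        · by_cases hl : v ∈ laterUnion C k
          · rw [glue_of_later hm hl, glue_of_later hm hl]
          · exact glue_else hm hl
      rw [h1, ← h2]
      exact add_comm _ _
  · have h1 : g j (gluePoint C a (fun _ => x) j x) = g j (gluePoint C a b j x) :=
      hdep j _ _ fun v hv => by rw [glue_of_mem hv, glue_of_mem hv]
    have h2 : g j (gluePoint C a b j (fun v => if v ∈ laterUnion C j then x v else a j v))
        = g j (gluePoint C a (fun _ => x) k' x) := by
      refine hdep j _ _ fun v hv => ?_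
      rw [glue_of_mem hv]
      by_cases hl : v ∈ laterUnion C j
      · rw [if_pos hl, hPk'_later v hl]
      · rw [if_neg hl, hPk'_top v hv hl]
    rw [h1, h2]
  · have hvl : ∀ v, v ∈ C j → v ∈ laterUnion C k :=
      fun v hv => mem_laterUnion.2 ⟨j, hkj, hv⟩
    have h1 : g j (gluePoint C a (fun _ => x) k x)
        = g j (gluePoint C a (fun _ => x) k' x) :=
      hdep j _ _ fun v hv => by rw [hPk_mem v (Or.inr (hvl v hv)), hPk'_later v (hvl v hv)]
    have h2 : g j (gluePoint C a b k (fun v => if v ∈ laterUnion C k then x v else a k v))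
        = g j (gluePoint C a b k x) := by
      refine hdep j _ _ fun v hv => ?_
      by_cases hm : v ∈ C k
      · rw [glue_of_mem hm, glue_of_mem hm, if_pos (hvl v hv)]
      · rw [glue_of_later hm (hvl v hv), glue_of_later hm (hvl v hv)]
    rw [h1, h2]
    exact add_comm _ _

end Aux2

/-- for a chordal graph with maximal cliques ordered with the running
intersection property, a convex `f = Σ g_i(x_{C_i})` such that for each `i < t` there
are vectors `a^{(i)}, b^{(i)}` making
`f(a^{(1)},...,a^{(i−1)}, x_{C_i}, b^{(i)}) − f(a^{(1)},...,a^{(i−1)}, a^{(i)},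
x_{C_i ∩ C_{[i+1,t]}}, b^{(i)})` convex, admits a decomposition `f = Σ ĝ_i(x_{C_i})`
into convex summands. -/
theorem convex_decomposition_of_running_intersection {d t : ℕ}
    (C : Fin t → Finset (Fin d))
    (hcoverV : ∀ v : Fin d, ∃ i, v ∈ C i)
    (hRIP : ∀ i : Fin t, i.val + 1 < t →
      ∃ j : Fin t, i < j ∧ C i ∩ laterUnion C i ⊆ C j)
    (f : (Fin d → ℝ) → ℝ) (hf : ConvexOn ℝ Set.univ f)
    (g : Fin t → (Fin d → ℝ) → ℝ)
    (hdep : ∀ i (x y : Fin d → ℝ), (∀ v ∈ C i, x v = y v) → g i x = g i y)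
    (hsum : ∀ x, f x = ∑ i, g i x)
    (a b : Fin t → Fin d → ℝ)
    (hkey : ∀ i : Fin t, i.val + 1 < t →
      ConvexOn ℝ Set.univ (fun x : Fin d → ℝ =>
        f (gluePoint C a b i x) -
          f (gluePoint C a b i (fun v => if v ∈ laterUnion C i then x v else a i v)))) :
    ∃ ghat : Fin t → (Fin d → ℝ) → ℝ,
      (∀ i, ConvexOn ℝ Set.univ (ghat i)) ∧
      (∀ i (x y : Fin d → ℝ), (∀ v ∈ C i, x v = y v) → ghat i x = ghat i y) ∧
      ∀ x, f x = ∑ i, ghat i x := by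
  classical
  refine ⟨fun i x => if h : i.val + 1 < t then
      f (gluePoint C a b i x)
        - f (gluePoint C a b i (fun v => if v ∈ laterUnion C i then x v else a i v))
    else f (gluePoint C a b i x), ?_, ?_, ?_⟩
  · intro i
    dsimp only
    by_cases h : i.val + 1 < t
    · have he : (fun x : Fin d → ℝ => if h : i.val + 1 < t then
          f (gluePoint C a b i x)
            - f (gluePoint C a b i (fun v => if v ∈ laterUnion C i then x v else a i v))
        else f (gluePoint C a b i x))
          = fun x : Fin d → ℝ =>
            f (gluePoint C a b i x)
              - f (gluePoint C a b i (fun v => if v ∈ laterUnion C i then x v else a i v)) := by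
        funext y; rw [dif_pos h]
      rw [he]
      exact hkey i h
    · have he : (fun x : Fin d → ℝ => if h : i.val + 1 < t then
          f (gluePoint C a b i x)
            - f (gluePoint C a b i (fun v => if v ∈ laterUnion C i then x v else a i v))
        else f (gluePoint C a b i x))
          = fun x : Fin d → ℝ => f (gluePoint C a b i x) := by
        funext y; rw [dif_neg h]
      rw [he]
      exact convexOn_glue hf C a b i
  · intro i x y hxy
    have e1 : gluePoint C a b i x = gluePoint C a b i y := glue_congr hxy
    have e2 : gluePoint C a b i (fun v => if v ∈ laterUnion C i then x v else a i v)
        = gluePoint C a b i (fun v => if v ∈ laterUnion C i then y v else a i v) := by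
      refine glue_congr fun v hv => ?_
      by_cases hl : v ∈ laterUnion C i
      · rw [if_pos hl, if_pos hl, hxy v hv]
      · rw [if_neg hl, if_neg hl]
    dsimp only
    rw [e1, e2]
  · intro x
    by_cases ht : 0 < t
    swap
    · have ht0 : t = 0 := by omega
      subst ht0
      rw [hsum x]
      simp
    have key : ∀ k k' : Fin t, k'.val = k.val + 1 →
        f (gluePoint C a (fun _ => x) k x)
          + f (gluePoint C a b k (fun v => if v ∈ laterUnion C k then x v else a k v))
        = f (gluePoint C a b k x) + f (gluePoint C a (fun _ => x) k' x) := by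
      intro k k' hkk'
      rw [hsum, hsum, hsum, hsum, ← Finset.sum_add_distrib, ← Finset.sum_add_distrib]
      exact Finset.sum_congr rfl fun j _ => step_eq hRIP hdep x k k' hkk' j
    have main : ∀ n : ℕ, ∀ m : ℕ, ∀ hm : m < t, t - m ≤ n →
        f (gluePoint C a (fun _ => x) ⟨m, hm⟩ x)
          = ∑ i ∈ Finset.univ.filter (fun i : Fin t => m ≤ i.val),
              (if h : i.val + 1 < t then
                f (gluePoint C a b i x)
                  - f (gluePoint C a b i (fun v => if v ∈ laterUnion C i then x v else a i v))
              else f (gluePoint C a b i x)) := by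
      intro n
      induction n with
      | zero => intro m hm hle; exfalso; omega
      | succ n ih =>
        intro m hm hle
        by_cases hm1 : m + 1 < t
        · have hsplit : (Finset.univ.filter fun i : Fin t => m ≤ i.val)
              = insert (⟨m, hm⟩ : Fin t)
                  (Finset.univ.filter fun i : Fin t => m + 1 ≤ i.val) := by
            ext i
            simp only [Finset.mem_filter, Finset.mem_insert, Finset.mem_univ, true_and,
              Fin.ext_iff]
            omega
          rw [hsplit, Finset.sum_insert (by simp), ← ih (m + 1) hm1 (by omega)]
          have hk := key ⟨m, hm⟩ ⟨m + 1, hm1⟩ rfl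
          rw [dif_pos hm1]
          linarith [hk]
        · have hone : (Finset.univ.filter fun i : Fin t => m ≤ i.val)
              = {(⟨m, hm⟩ : Fin t)} := by
            ext i
            have := i.isLt
            simp only [Finset.mem_filter, Finset.mem_singleton, Finset.mem_univ, true_and,
              Fin.ext_iff]
            omega
          rw [hone, Finset.sum_singleton, dif_neg hm1]
          congr 1
          funext v
          by_cases hv : v ∈ C ⟨m, hm⟩
          · rw [glue_of_mem hv, glue_of_mem hv]
          · refine glue_else hv ?_
            rw [mem_laterUnion]
            rintro ⟨jj, hjj, -⟩
            have h1 : m < jj.val := hjj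
            have h2 := jj.isLt
            omega
    have h0 : gluePoint C a (fun _ => x) ⟨0, ht⟩ x = x := by
      funext v
      obtain ⟨i, hi⟩ := hcoverV v
      by_cases hv : v ∈ C ⟨0, ht⟩
      · exact glue_of_mem hv
      · refine glue_of_later hv (mem_laterUnion.2 ⟨i, ?_, hi⟩)
        rw [Fin.lt_def]
        rcases Nat.eq_zero_or_pos i.val with h | h
        · exact absurd ((Fin.ext h : i = ⟨0, ht⟩) ▸ hi) hv
        · exact h
    have hmain := main t 0 ht (by omega)
    rw [h0] at hmain
    rw [hmain]
    refine Finset.sum_congr ?_ fun _ _ => rfl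
    ext i
    simp
end
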